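/- Let v : [0,L] → ℝ be C^m (m ≥ 1) whose derivatives up to order m never vanish simultaneously. Then there exist C₁, δ₁ > 0 such that for all λ ∈ ℝ and δ ∈ (0,δ₁), the δ-neighborhood ℰ^m_{λ,δ} = {y ∈ (0,L) : dist(y, E^m_{λ,δ}) < δ} of the thickened level set E^m_{λ,δ} = {y : |v(y) − λ| < δ^m} has Lebesgue measure at most C₁ δ. -/

import Mathlib

open MeasureTheory Metric Set
open scoped Topology

/-!
Near every point of `[0, L]` some derivative `v⁽ⁱ⁾` with `1 ≤ i ≤ m` stays away from zero, say
`|v⁽ⁱ⁾| ≥ c`. If `ε ≤ c rⁱ`, the sublevel set `{|v - λ| < ε}` of such a piece is covered by fewer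
than `2ⁱ` intervals of length `4r`: pick a point `u` where `|v⁽ⁱ⁻¹⁾| < c r`; by the mean value
theorem `|v⁽ⁱ⁻¹⁾| ≥ c r` outside `[u - 2r, u + 2r]`, and induction on `i` handles the two sides.
For `δ < 1` we have `δ ^ m ≤ δ ^ i`, so `r` can be taken proportional to `δ`, uniformly in `λ`;
compactness of `[0, L]` glues finitely many pieces, and the `δ`-neighbourhood of boundedly many
intervals of length `O(δ)` has measure `O(δ)`.
-/

theorem mul_abs_sub_le_abs_sub_of_le_abs_deriv {a b c : ℝ} {g g' : ℝ → ℝ}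
    (hg : ∀ x ∈ Icc a b, HasDerivWithinAt g (g' x) (Icc a b) x)
    (hc : ∀ x ∈ Icc a b, c ≤ |g' x|) {x y : ℝ} (hx : x ∈ Icc a b) (hy : y ∈ Icc a b) :
    c * |y - x| ≤ |g y - g x| := by
  wlog hxy : x ≤ y generalizing x y
  · rw [abs_sub_comm y, abs_sub_comm (g y)]
    exact this hy hx (le_of_not_ge hxy)
  rcases hxy.eq_or_lt with rfl | hxy
  · simp
  have hsub : Icc x y ⊆ Icc a b := Icc_subset_Icc hx.1 hy.2
  have hcont : ContinuousOn g (Icc x y) :=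
    ContinuousOn.mono (fun z hz => (hg z hz).continuousWithinAt) hsub
  have hderiv : ∀ z ∈ Ioo x y, HasDerivAt g (g' z) z := fun z hz =>
    (hg z (hsub (Ioo_subset_Icc_self hz))).hasDerivAt
      (Icc_mem_nhds (hx.1.trans_lt hz.1) (hz.2.trans_le hy.2))
  obtain ⟨ξ, hξ, hslope⟩ := exists_hasDerivAt_eq_slope g g' hxy hcont hderiv
  have hmvt : g y - g x = g' ξ * (y - x) := by
    rw [hslope, div_mul_cancel₀ _ (sub_pos.2 hxy).ne']
  rw [hmvt, abs_mul]
  gcongr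
  exact hc ξ (hsub (Ioo_subset_Icc_self hξ))

theorem exists_finset_sublevel_subset_biUnion_closedBall (k : ℕ) {a b c r ε : ℝ}
    {f : ℕ → ℝ → ℝ} (hc : 0 ≤ c) (hr : 0 ≤ r) (hε : ε ≤ c * r ^ k)
    (hf : ∀ j < k, ∀ x ∈ Icc a b, HasDerivWithinAt (f j) (f (j + 1) x) (Icc a b) x)
    (hfk : ∀ x ∈ Icc a b, c ≤ |f k x|) :
    ∃ P : Finset ℝ, P.card < 2 ^ k ∧
      {x ∈ Icc a b | |f 0 x| < ε} ⊆ ⋃ p ∈ P, closedBall p (2 * r) := by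
  induction k generalizing a b c with
  | zero =>
    rw [pow_zero, mul_one] at hε
    exact ⟨∅, by simp, fun x hx => absurd hx.2 (not_lt.2 (hε.trans (hfk x hx.1)))⟩
  | succ k ih =>
    have hcr : 0 ≤ c * r := mul_nonneg hc hr
    have hε' : ε ≤ c * r * r ^ k := by rwa [mul_assoc, ← pow_succ']
    have hf' : ∀ {a' b'}, a ≤ a' → b' ≤ b → ∀ j < k, ∀ x ∈ Icc a' b',
        HasDerivWithinAt (f j) (f (j + 1) x) (Icc a' b') x := fun ha hb j hj x hx =>
      (hf j (by omega) x (Icc_subset_Icc ha hb hx)).mono (Icc_subset_Icc ha hb)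
    by_cases hsmall : ∃ u ∈ Icc a b, |f k u| < c * r
    · obtain ⟨u, hu, hfu⟩ := hsmall
      have hfar : ∀ x ∈ Icc a b, 2 * r ≤ |x - u| → c * r ≤ |f k x| := by
        intro x hx hxu
        have hgrow := mul_abs_sub_le_abs_sub_of_le_abs_deriv (hf k k.lt_succ_self) hfk hu hx
        nlinarith [abs_sub (f k x) (f k u), mul_le_mul_of_nonneg_left hxu hc]
      obtain ⟨P₁, hP₁, hsub₁⟩ := ih (a := a) (b := u - 2 * r) hcr hε'
        (hf' le_rfl (by linarith [hu.2])) fun x hx =>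
          hfar x ⟨hx.1, by linarith [hx.2, hu.2]⟩ (le_abs.2 (Or.inr (by linarith [hx.2])))
      obtain ⟨P₂, hP₂, hsub₂⟩ := ih (a := u + 2 * r) (b := b) hcr hε'
        (hf' (by linarith [hu.1]) le_rfl) fun x hx =>
          hfar x ⟨by linarith [hx.1, hu.1], hx.2⟩ (le_abs.2 (Or.inl (by linarith [hx.1])))
      refine ⟨insert u (P₁ ∪ P₂), ?_, ?_⟩
      · have := Finset.card_union_le P₁ P₂
        have := Finset.card_insert_le u (P₁ ∪ P₂)
        rw [pow_succ]
        omega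
      · rw [Finset.set_biUnion_insert, Finset.set_biUnion_union]
        rintro x ⟨hx, hfx⟩
        rcases le_or_gt x (u - 2 * r) with hxl | hxl
        · exact Or.inr (Or.inl (hsub₁ ⟨⟨hx.1, hxl⟩, hfx⟩))
        rcases le_or_gt (u + 2 * r) x with hxr | hxr
        · exact Or.inr (Or.inr (hsub₂ ⟨⟨hxr, hx.2⟩, hfx⟩))
        · refine Or.inl (mem_closedBall.2 (abs_le.2 ⟨?_, ?_⟩)) <;> linarith
    · push Not at hsmall
      obtain ⟨P, hP, hsub⟩ := ih hcr hε' (hf' le_rfl le_rfl) hsmall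
      exact ⟨P, hP.trans (Nat.pow_lt_pow_succ one_lt_two), hsub⟩

theorem ContDiffOn.hasDerivWithinAt_iteratedDerivWithin {𝕜 F : Type*}
    [NontriviallyNormedField 𝕜] [NormedAddCommGroup F] [NormedSpace 𝕜 F] {f : 𝕜 → F}
    {s : Set 𝕜} {n : WithTop ℕ∞} {j : ℕ} {x : 𝕜} (hf : ContDiffOn 𝕜 n f s) (hs : UniqueDiffOn 𝕜 s)
    (hj : j < n) (hx : x ∈ s) :
    HasDerivWithinAt (iteratedDerivWithin j f s) (iteratedDerivWithin (j + 1) f s x) s x := by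
  rw [iteratedDerivWithin_succ]
  exact (hf.differentiableOn_iteratedDerivWithin hj hs x hx).hasDerivWithinAt

def SublevelCoverable (v : ℝ → ℝ) (m : ℕ) (J : Set ℝ) : Prop :=
  ∃ K ≥ (0 : ℝ), ∃ N : ℕ, ∀ lam : ℝ, ∀ δ ∈ Ioo (0 : ℝ) 1, ∃ Q : Finset ℝ, Q.card ≤ N ∧
    {x ∈ J | |v x - lam| < δ ^ m} ⊆ ⋃ p ∈ Q, closedBall p (K * δ)

namespace SublevelCoverable

variable {v : ℝ → ℝ} {m : ℕ} {J J' : Set ℝ}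

theorem empty : SublevelCoverable v m ∅ :=
  ⟨0, le_rfl, 0, fun _ _ _ => ⟨∅, le_rfl, by simp⟩⟩

theorem mono (h : SublevelCoverable v m J') (hJ : J ⊆ J') : SublevelCoverable v m J := by
  obtain ⟨K, hK, N, hcover⟩ := h
  refine ⟨K, hK, N, fun lam δ hδ => ?_⟩
  obtain ⟨Q, hQ, hsub⟩ := hcover lam δ hδ
  exact ⟨Q, hQ, fun x hx => hsub ⟨hJ hx.1, hx.2⟩⟩

theorem union (h : SublevelCoverable v m J) (h' : SublevelCoverable v m J') :
    SublevelCoverable v m (J ∪ J') := by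
  obtain ⟨K, hK, N, hcover⟩ := h
  obtain ⟨K', hK', N', hcover'⟩ := h'
  refine ⟨max K K', le_max_of_le_left hK, N + N', fun lam δ hδ => ?_⟩
  obtain ⟨Q, hQ, hsub⟩ := hcover lam δ hδ
  obtain ⟨Q', hQ', hsub'⟩ := hcover' lam δ hδ
  have hball : ∀ {K''}, K'' ≤ max K K' → ∀ p : ℝ,
      closedBall p (K'' * δ) ⊆ closedBall p (max K K' * δ) :=
    fun hK'' _ => closedBall_subset_closedBall (mul_le_mul_of_nonneg_right hK'' hδ.1.le)
  refine ⟨Q ∪ Q', (Finset.card_union_le Q Q').trans (add_le_add hQ hQ'), ?_⟩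
  rintro x ⟨hx | hx, hvx⟩
  · exact biUnion_mono (Finset.coe_subset.2 Finset.subset_union_left)
      (fun p _ => hball (le_max_left _ _) p) (hsub ⟨hx, hvx⟩)
  · exact biUnion_mono (Finset.coe_subset.2 Finset.subset_union_right)
      (fun p _ => hball (le_max_right _ _) p) (hsub' ⟨hx, hvx⟩)

theorem of_le_abs_iteratedDerivWithin {s : Set ℝ} {i : ℕ} {a b c : ℝ}
    (hs : UniqueDiffOn ℝ s) (hv : ContDiffOn ℝ m v s) (hab : Icc a b ⊆ s) (hi : i ≠ 0)
    (him : i ≤ m) (hc : 0 < c) (hlow : ∀ x ∈ Icc a b, c ≤ |iteratedDerivWithin i v s x|) :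
    SublevelCoverable v m (Icc a b) := by
  set K := max 1 c⁻¹
  refine ⟨2 * K, by positivity, 2 ^ m, fun lam δ hδ => ?_⟩
  set g : ℕ → ℝ → ℝ := fun j => iteratedDerivWithin j (fun x => v x - lam) s
  have hchain : ∀ j < i, ∀ x ∈ Icc a b, HasDerivWithinAt (g j) (g (j + 1) x) (Icc a b) x :=
    fun j hj x hx => ((hv.sub contDiffOn_const).hasDerivWithinAt_iteratedDerivWithin hs
      (by exact_mod_cast hj.trans_le him) (hab hx)).mono hab
  have hglow : ∀ x ∈ Icc a b, c ≤ |g i x| := by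
    simpa only [g, sub_eq_neg_add, iteratedDerivWithin_const_add (Nat.pos_of_ne_zero hi)]
      using hlow
  have hε : δ ^ m ≤ c * (K * δ) ^ i := calc
    δ ^ m ≤ 1 * δ ^ i := by rw [one_mul]; exact pow_le_pow_of_le_one hδ.1.le hδ.2.le him
    _ ≤ c * K ^ i * δ ^ i := by
      refine mul_le_mul_of_nonneg_right ?_ (pow_nonneg hδ.1.le i)
      calc 1 = c * c⁻¹ := (mul_inv_cancel₀ hc.ne').symm
        _ ≤ c * K ^ i := by
          gcongr
          exact (le_max_right _ _).trans (le_self_pow₀ (le_max_left _ _) hi)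
    _ = c * (K * δ) ^ i := by ring
  obtain ⟨P, hP, hsub⟩ :=
    exists_finset_sublevel_subset_biUnion_closedBall i hc.le
      (mul_nonneg (by positivity) hδ.1.le) hε hchain hglow
  refine ⟨P, hP.le.trans (Nat.pow_le_pow_right two_pos him), ?_⟩
  simpa only [g, iteratedDerivWithin_zero, mul_assoc] using hsub

end SublevelCoverable

theorem sublevelCoverable_Icc {v : ℝ → ℝ} {m : ℕ} {a b : ℝ} (hab : a < b)
    (hv : ContDiffOn ℝ m v (Icc a b))
    (hnondeg : ∀ y ∈ Icc a b, ∃ i, 1 ≤ i ∧ i ≤ m ∧ iteratedDerivWithin i v (Icc a b) y ≠ 0) :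
    SublevelCoverable v m (Icc a b) := by
  have hs := uniqueDiffOn_Icc hab
  refine isCompact_Icc.induction_on .empty (fun _ _ hJ h => h.mono hJ)
    (fun _ _ h h' => h.union h') fun y hy => ?_
  obtain ⟨i, hi, him, hne⟩ := hnondeg y hy
  have hcont : ContinuousWithinAt (iteratedDerivWithin i v (Icc a b)) (Icc a b) y :=
    hv.continuousOn_iteratedDerivWithin (by exact_mod_cast him) hs y hy
  have hev : ∀ᶠ x in 𝓝[Icc a b] y,
      |iteratedDerivWithin i v (Icc a b) y| / 2 ≤ |iteratedDerivWithin i v (Icc a b) x| :=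
    hcont.abs.eventually (le_mem_nhds (half_lt_self (abs_pos.2 hne)))
  obtain ⟨ε, hε, hsub⟩ := (nhdsWithin_hasBasis (nhds_basis_Icc_pos y) (Icc a b)).mem_iff.1 hev
  refine ⟨Icc (y - ε) (y + ε) ∩ Icc a b,
    (nhdsWithin_hasBasis (nhds_basis_Icc_pos y) (Icc a b)).mem_of_mem hε, ?_⟩
  rw [Icc_inter_Icc]
  exact .of_le_abs_iteratedDerivWithin hs hv (Icc_subset_Icc (le_max_right _ _)
    (min_le_right _ _)) (by omega) him (half_pos (abs_pos.2 hne))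
    fun x hx => hsub (by rwa [Icc_inter_Icc])

theorem volume_thickening_biUnion_closedBall_le (Q : Finset ℝ) {ρ δ : ℝ} (hρ : 0 ≤ ρ)
    (hδ : 0 < δ) :
    volume (thickening δ (⋃ p ∈ Q, closedBall p ρ)) ≤
      ENNReal.ofReal (Q.card * (2 * (δ + ρ))) := by
  simp only [thickening_iUnion, thickening_closedBall hδ hρ]
  calc volume (⋃ p ∈ Q, ball p (δ + ρ)) ≤ ∑ p ∈ Q, volume (ball p (δ + ρ)) :=
        measure_biUnion_finset_le Q _
    _ = ENNReal.ofReal (Q.card * (2 * (δ + ρ))) := by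
        rw [ENNReal.ofReal_mul (Nat.cast_nonneg _), ENNReal.ofReal_natCast]
        simp [Real.volume_ball]

theorem stmt_5_general (L : ℝ) (hL : 0 < L) (m : ℕ) (v : ℝ → ℝ)
    (hv : ContDiffOn ℝ m v (Set.Icc 0 L))
    (hnondeg : ∀ y ∈ Set.Icc (0 : ℝ) L,
      ∃ i, 1 ≤ i ∧ i ≤ m ∧ iteratedDerivWithin i v (Set.Icc 0 L) y ≠ 0) :
    ∃ C₁ > (0 : ℝ), ∃ δ₁ > (0 : ℝ), ∀ lam : ℝ, ∀ δ ∈ Set.Ioo (0 : ℝ) δ₁,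
      volume (Set.Ioo (0 : ℝ) L ∩
          Metric.thickening δ {y ∈ Set.Ioo (0 : ℝ) L | |v y - lam| < δ ^ m}) ≤
        ENNReal.ofReal (C₁ * δ) := by
  obtain ⟨K, hK, N, hcover⟩ := sublevelCoverable_Icc hL hv hnondeg
  refine ⟨2 * (N + 1) * (1 + K), mul_pos (by positivity) (by linarith), 1, one_pos,
    fun lam δ hδ => ?_⟩
  obtain ⟨Q, hQ, hsub⟩ := hcover lam δ hδ
  have hE : {y ∈ Ioo 0 L | |v y - lam| < δ ^ m} ⊆ ⋃ p ∈ Q, closedBall p (K * δ) :=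
    fun y hy => hsub ⟨Ioo_subset_Icc_self hy.1, hy.2⟩
  calc _ ≤ volume (thickening δ (⋃ p ∈ Q, closedBall p (K * δ))) :=
        measure_mono (inter_subset_right.trans (thickening_subset_of_subset δ hE))
    _ ≤ ENNReal.ofReal (Q.card * (2 * (δ + K * δ))) :=
        volume_thickening_biUnion_closedBall_le Q (mul_nonneg hK hδ.1.le) hδ.1
    _ ≤ ENNReal.ofReal (2 * (N + 1) * (1 + K) * δ) := by
        gcongr ENNReal.ofReal ?_
        have hQN : (Q.card : ℝ) ≤ N + 1 := by exact_mod_cast hQ.trans N.le_succ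
        nlinarith [mul_le_mul_of_nonneg_right hQN (by nlinarith [hδ.1] : 0 ≤ 2 * (1 + K) * δ)]

/-- Let `v : [0,L] → ℝ` be `C^m` (`m ≥ 1`) whose derivatives up to order `m` never
vanish simultaneously. Then there are `C₁, δ₁ > 0` such that for all `λ ∈ ℝ` and
`δ ∈ (0,δ₁)`, the `δ`-neighborhood `ℰ^m_{λ,δ}` (in `(0,L)`) of the thickened level set
`E^m_{λ,δ} = {y ∈ (0,L) : |v(y) - λ| < δ^m}` has measure at most `C₁ δ`. -/
theorem stmt_5 (L : ℝ) (hL : 0 < L) (m : ℕ) (hm : 1 ≤ m) (v : ℝ → ℝ)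
    (hv : ContDiffOn ℝ m v (Set.Icc 0 L))
    (hnondeg : ∀ y ∈ Set.Icc (0 : ℝ) L,
      ∃ i, 1 ≤ i ∧ i ≤ m ∧ iteratedDerivWithin i v (Set.Icc 0 L) y ≠ 0) :
    ∃ C₁ > (0 : ℝ), ∃ δ₁ > (0 : ℝ), ∀ lam : ℝ, ∀ δ ∈ Set.Ioo (0 : ℝ) δ₁,
      volume (Set.Ioo (0 : ℝ) L ∩
          Metric.thickening δ {y ∈ Set.Ioo (0 : ℝ) L | |v y - lam| < δ ^ m}) ≤
        ENNReal.ofReal (C₁ * δ) :=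
  stmt_5_general L hL m v hv hnondeg
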